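/- arXiv:2303.10027 — 2 statements merged into one kernel-verified Lean document; each statement's English description precedes it below -/
import Mathlib

section
/- Let M ∈ Z^{m×m} be non-singular with no eigenvalue of modulus 1. Then there exists a polynomial g ∈ Z[X], g(X) = Σ_{l=0}^{p−1} c_l X^l, with g(M) = 0 (the zero matrix), and an index L such that c_L ≥ 4·(C + Σ_{l≠L} |c_l|), where C = c_L − 4·⌊c_L/4⌋ ∈ {0,1,2,3}. -/
/-!
Every eigenvalue `λ` of `M` has `|λ| ≠ 1`, so for `n` large the eigenvalues `λⁿ` of `Mⁿ` are all
either at most `ε` or at least `ε⁻¹` in modulus. Pulling the large roots out as scalars,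
`q = χ_{Mⁿ} = ∏ (X - λⁿ)` becomes `c ∏ fᵢ` with every `fᵢ` within `ε` of `X` or of `1` in the
`ℓ¹` norm of coefficients, so `q` is within `((1 + ε)ᵐ - 1) |c|` of `c Xᵉ` (`e` the number of small
roots). Its `e`-th coefficient therefore dominates all the others, and `g = 4 sign(qₑ) q(Xⁿ)`
annihilates `M` by Cayley–Hamilton.
-/

open Matrix Polynomial BigOperators

namespace Polynomial

section L1Norm

variable {R : Type*}

section SeminormedRing

variable [SeminormedRing R]

noncomputable def l1Norm (p : R[X]) : ℝ := p.sum fun _ a => ‖a‖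

lemma l1Norm_eq_sum_of_support_subset {p : R[X]} {s : Finset ℕ} (h : p.support ⊆ s) :
    p.l1Norm = ∑ n ∈ s, ‖p.coeff n‖ :=
  sum_eq_of_subset _ (fun _ => norm_zero) h

lemma l1Norm_eq_sum_range (p : R[X]) :
    p.l1Norm = ∑ n ∈ Finset.range (p.natDegree + 1), ‖p.coeff n‖ :=
  p.sum_over_range fun _ => norm_zero

lemma l1Norm_nonneg (p : R[X]) : 0 ≤ p.l1Norm :=
  Finset.sum_nonneg fun _ _ => norm_nonneg _

@[simp]
lemma l1Norm_zero : (0 : R[X]).l1Norm = 0 := by simp [l1Norm]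

lemma norm_coeff_le_l1Norm (p : R[X]) (n : ℕ) : ‖p.coeff n‖ ≤ p.l1Norm := by
  by_cases hn : n ∈ p.support
  · exact Finset.single_le_sum (f := fun n => ‖p.coeff n‖) (fun _ _ => norm_nonneg _) hn
  · rw [notMem_support_iff.mp hn, norm_zero]
    exact p.l1Norm_nonneg

lemma l1Norm_add_le (p q : R[X]) : (p + q).l1Norm ≤ p.l1Norm + q.l1Norm := by
  classical
  rw [l1Norm_eq_sum_of_support_subset support_add,
    l1Norm_eq_sum_of_support_subset Finset.subset_union_left,
    l1Norm_eq_sum_of_support_subset Finset.subset_union_right, ← Finset.sum_add_distrib]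
  exact Finset.sum_le_sum fun n _ => by rw [coeff_add]; exact norm_add_le _ _

lemma l1Norm_sum_le {ι : Type*} (s : Finset ι) (f : ι → R[X]) :
    (∑ i ∈ s, f i).l1Norm ≤ ∑ i ∈ s, (f i).l1Norm :=
  Finset.le_sum_of_subadditive l1Norm l1Norm_zero.le l1Norm_add_le s f

@[simp]
lemma l1Norm_monomial (n : ℕ) (a : R) : (monomial n a).l1Norm = ‖a‖ := by
  classical
  rw [l1Norm_eq_sum_of_support_subset (support_monomial_subset n a), Finset.sum_singleton,
    coeff_monomial_same]

lemma l1Norm_mul_le (p q : R[X]) : (p * q).l1Norm ≤ p.l1Norm * q.l1Norm := by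
  rw [mul_eq_sum_sum]
  refine (l1Norm_sum_le _ _).trans ?_
  rw [l1Norm, Polynomial.sum_def, Finset.sum_mul]
  refine Finset.sum_le_sum fun i _ => ?_
  refine (l1Norm_sum_le _ _).trans ?_
  rw [l1Norm, Polynomial.sum_def, Finset.mul_sum]
  exact Finset.sum_le_sum fun j _ => by rw [l1Norm_monomial]; exact norm_mul_le _ _

lemma l1Norm_map {S : Type*} [SeminormedRing S] (f : R →+* S) (hf : ∀ a, ‖f a‖ = ‖a‖)
    (p : R[X]) : (p.map f).l1Norm = p.l1Norm := by
  rw [l1Norm_eq_sum_of_support_subset (support_map_subset f p),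
    l1Norm_eq_sum_of_support_subset subset_rfl]
  simp only [coeff_map, hf]

/-- `4 ‖p‖₁ < 5 ‖pₑ‖` says that `‖pₑ‖ > 4 ∑_{j ≠ e} ‖pⱼ‖`. -/
lemma four_mul_l1Norm_lt_of_l1Norm_sub_lt {p : R[X]} {c : R} {e : ℕ}
    (h : 9 * (p - C c * X ^ e).l1Norm < ‖c‖) : 4 * p.l1Norm < 5 * ‖p.coeff e‖ := by
  set r := p - C c * X ^ e
  have hcoeff : ‖c‖ ≤ ‖p.coeff e‖ + r.l1Norm := by
    have : c = p.coeff e - r.coeff e := by simp [r]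
    rw [this]
    exact (norm_sub_le _ _).trans (add_le_add_right (r.norm_coeff_le_l1Norm e) _)
  have hnorm : p.l1Norm ≤ ‖c‖ + r.l1Norm := by
    have := l1Norm_add_le (C c * X ^ e) r
    rwa [add_sub_cancel, C_mul_X_pow_eq_monomial, l1Norm_monomial] at this
  linarith

end SeminormedRing

section SeminormedCommRing

variable [SeminormedCommRing R]

lemma l1Norm_expand {n : ℕ} (hn : 0 < n) (p : R[X]) : (expand R n p).l1Norm = p.l1Norm := by
  classical
  have hsupp : (expand R n p).support ⊆ p.support.image (n * ·) := by
    intro l hl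
    rw [mem_support_iff, coeff_expand hn] at hl
    split_ifs at hl with hdvd
    · exact Finset.mem_image.mpr ⟨l / n, mem_support_iff.mpr hl, Nat.mul_div_cancel' hdvd⟩
    · exact absurd rfl hl
  rw [l1Norm_eq_sum_of_support_subset hsupp,
    Finset.sum_image fun _ _ _ _ h => Nat.eq_of_mul_eq_mul_left hn h]
  simp only [coeff_expand_mul' hn]
  rfl

lemma l1Norm_multiset_prod_sub_le [NormMulClass R] {ι : Type*} (s : Multiset ι) (f : ι → R[X])
    (a : ι → R) (k : ι → ℕ) {ε : ℝ} (hε : 0 ≤ ε)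
    (h : ∀ i ∈ s, (f i - C (a i) * X ^ k i).l1Norm ≤ ε * ‖a i‖) :
    ((s.map f).prod - C (s.map a).prod * X ^ (s.map k).sum).l1Norm
      ≤ ((1 + ε) ^ Multiset.card s - 1) * ‖(s.map a).prod‖ := by
  induction s using Multiset.induction_on with
  | empty => simp
  | cons i t ih =>
    have hi := h i (Multiset.mem_cons_self i t)
    have ht := ih fun j hj => h j (Multiset.mem_cons_of_mem hj)
    set u := f i - C (a i) * X ^ k i
    set A := (t.map a).prod
    set v := (t.map f).prod - C A * X ^ (t.map k).sum
    set δ := (1 + ε) ^ Multiset.card t - 1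
    have hδ : 0 ≤ δ := sub_nonneg.mpr (one_le_pow₀ (by linarith))
    have hsplit : ((i ::ₘ t).map f).prod - C ((i ::ₘ t).map a).prod * X ^ ((i ::ₘ t).map k).sum
        = C (a i) * X ^ k i * v + u * (C A * X ^ (t.map k).sum) + u * v := by
      simp only [Multiset.map_cons, Multiset.prod_cons, Multiset.sum_cons, u, v, A, C_mul, pow_add]
      ring
    have hmono : ∀ (b : R) (n : ℕ), (C b * X ^ n).l1Norm = ‖b‖ := fun b n => by
      rw [C_mul_X_pow_eq_monomial, l1Norm_monomial]
    calc _ ≤ ‖a i‖ * (δ * ‖A‖) + ε * ‖a i‖ * ‖A‖ + ε * ‖a i‖ * (δ * ‖A‖) := by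
          rw [hsplit]
          refine (l1Norm_add_le _ _).trans (add_le_add ((l1Norm_add_le _ _).trans
            (add_le_add ?_ ?_)) ?_) <;> refine (l1Norm_mul_le _ _).trans ?_
          · rw [hmono]; gcongr
          · rw [hmono]; gcongr
          · gcongr; exact l1Norm_nonneg _
      _ = _ := by
          simp only [Multiset.card_cons, Multiset.map_cons, Multiset.prod_cons, norm_mul, pow_succ, δ]
          ring

end SeminormedCommRing

end L1Norm

lemma Monic.exists_four_mul_l1Norm_lt {K : Type*} [NormedField K] {p : K[X]} (hp : p.Monic)
    (hsplit : p.Splits) {ε : ℝ} (hε : 0 < ε) (hεdeg : (1 + ε) ^ p.natDegree < 10 / 9)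
    (hroots : ∀ z ∈ p.roots, ‖z‖ ≤ ε ∨ ε⁻¹ ≤ ‖z‖) :
    ∃ e, 4 * p.l1Norm < 5 * ‖p.coeff e‖ := by
  classical
  set a : K → K := fun z => if ‖z‖ ≤ ε then 1 else -z
  set k : K → ℕ := fun z => if ‖z‖ ≤ ε then 1 else 0
  have hfactor : ∀ z ∈ p.roots, (X - C z - C (a z) * X ^ k z).l1Norm ≤ ε * ‖a z‖ := by
    intro z hz
    by_cases hsmall : ‖z‖ ≤ ε
    · rw [show X - C z - C (a z) * X ^ k z = monomial 0 (-z) by simp [a, k, hsmall],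
        l1Norm_monomial]
      simp [a, hsmall]
    · have hlarge : ε⁻¹ ≤ ‖z‖ := (hroots z hz).resolve_left hsmall
      rw [show X - C z - C (a z) * X ^ k z = X by simp [a, k, hsmall],
        ← monomial_one_one_eq_X, l1Norm_monomial]
      simpa [a, hsmall, ← inv_mul_le_iff₀ hε] using hlarge
  have ha : ∀ z ∈ p.roots, a z ≠ 0 := by
    intro z hz
    by_cases hsmall : ‖z‖ ≤ ε
    · simp [a, hsmall]
    · have : 0 < ‖z‖ := (inv_pos.mpr hε).trans_le ((hroots z hz).resolve_left hsmall)
      simpa [a, hsmall] using norm_pos_iff.mp this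
  have hprod := l1Norm_multiset_prod_sub_le p.roots (fun z => X - C z) a k hε.le hfactor
  rw [← hsplit.eq_prod_roots_of_monic hp, ← hsplit.natDegree_eq_card_roots] at hprod
  have hc : 0 < ‖(p.roots.map a).prod‖ :=
    norm_pos_iff.mpr (Multiset.prod_ne_zero fun h0 => by
      obtain ⟨z, hz, hz0⟩ := Multiset.mem_map.mp h0
      exact ha z hz hz0)
  exact ⟨_, four_mul_l1Norm_lt_of_l1Norm_sub_lt (c := (p.roots.map a).prod)
    (e := (p.roots.map k).sum) (by nlinarith)⟩

lemma exists_C_mul_coeff_ge {g : ℤ[X]} {L : ℕ} (h : 4 * g.l1Norm < 5 * ‖g.coeff L‖) :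
    ∃ c : ℤ, C c * g ≠ 0 ∧ L ≤ (C c * g).natDegree ∧
      (C c * g).coeff L ≥ 4 * (((C c * g).coeff L - 4 * ((C c * g).coeff L / 4)) +
        ∑ l ∈ (Finset.range ((C c * g).natDegree + 1)).erase L, |(C c * g).coeff l|) := by
  have hL : g.coeff L ≠ 0 := by
    intro h0
    rw [h0, norm_zero, mul_zero] at h
    linarith [g.l1Norm_nonneg]
  have hLdeg : L ≤ g.natDegree := le_natDegree_of_ne_zero hL
  set s := (g.coeff L).sign
  have hs : |s| = 1 := by simp [s, Int.abs_sign_of_ne_zero hL]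
  have hs0 : s ≠ 0 := by rintro h0; simp [h0] at hs
  have hdeg : (C (4 * s) * g).natDegree = g.natDegree := natDegree_C_mul (by omega)
  have hcoeffL : (C (4 * s) * g).coeff L = 4 * |g.coeff L| := by
    rw [coeff_C_mul, mul_assoc, Int.sign_mul_self_eq_abs]
  have hcoeff : ∀ l, |(C (4 * s) * g).coeff l| = 4 * |g.coeff l| := fun l => by
    rw [coeff_C_mul, abs_mul, abs_mul, hs, mul_one, abs_of_pos four_pos]
  have hrest : 4 * ∑ l ∈ (Finset.range (g.natDegree + 1)).erase L, |g.coeff l| < |g.coeff L| := by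
    have hsum := Finset.add_sum_erase (Finset.range (g.natDegree + 1)) (fun l => ‖g.coeff l‖)
      (Finset.mem_range.mpr (Nat.lt_succ_of_le hLdeg))
    rw [← l1Norm_eq_sum_range] at hsum
    simp only [Int.norm_eq_abs] at hsum h
    have : ((4 * ∑ l ∈ (Finset.range (g.natDegree + 1)).erase L, |g.coeff l| : ℤ) : ℝ)
        < ((|g.coeff L| : ℤ) : ℝ) := by push_cast; linarith
    exact_mod_cast this
  refine ⟨4 * s, mul_ne_zero (by simpa using hs0) (by rintro rfl; simp at hL), hdeg ▸ hLdeg, ?_⟩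
  rw [hdeg, hcoeffL, Int.mul_ediv_cancel_left _ four_ne_zero, sub_self, zero_add,
    Finset.sum_congr rfl fun l _ => hcoeff l, ← Finset.mul_sum]
  omega

end Polynomial

section

open Filter Topology

lemma eventually_pow_le_or_inv_le {x ε : ℝ} (hx0 : 0 ≤ x) (hx1 : x ≠ 1) (hε : 0 < ε) :
    ∀ᶠ n in atTop, x ^ n ≤ ε ∨ ε⁻¹ ≤ x ^ n := by
  rcases hx1.lt_or_gt with h | h
  · exact ((tendsto_pow_atTop_nhds_zero_of_lt_one hx0 h).eventually (ge_mem_nhds hε)).mono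
      fun _ => Or.inl
  · exact ((tendsto_pow_atTop_atTop_of_one_lt h).eventually_ge_atTop ε⁻¹).mono fun _ => Or.inr

lemma exists_pos_one_add_pow_lt (m : ℕ) {r : ℝ} (hr : 1 < r) : ∃ ε > 0, (1 + ε) ^ m < r := by
  have hlim : Tendsto (fun ε : ℝ => (1 + ε) ^ m) (𝓝[>] 0) (𝓝 1) :=
    (Continuous.tendsto' (by fun_prop) 0 1 (by simp)).mono_left nhdsWithin_le_nhds
  obtain ⟨ε, hεr, hε⟩ := ((hlim.eventually (gt_mem_nhds hr)).and self_mem_nhdsWithin).exists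
  exact ⟨ε, hε, hεr⟩

lemma Matrix.exists_charpoly_pow_roots_norm_le_or_inv_le {K ι : Type*} [NormedField K]
    [IsAlgClosed K] [Fintype ι] [DecidableEq ι] (B : Matrix ι ι K)
    (hB : ∀ z, B.charpoly.IsRoot z → ‖z‖ ≠ 1) {ε : ℝ} (hε : 0 < ε) :
    ∃ k > 0, ∀ z, (B ^ k).charpoly.IsRoot z → ‖z‖ ≤ ε ∨ ε⁻¹ ≤ ‖z‖ := by
  classical
  have hroots : ∀ᶠ k in atTop, ∀ w ∈ B.charpoly.roots.toFinset,
      ‖w‖ ^ k ≤ ε ∨ ε⁻¹ ≤ ‖w‖ ^ k :=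
    (eventually_all_finset _).2 fun w hw => eventually_pow_le_or_inv_le (norm_nonneg w)
      (hB w (isRoot_of_mem_roots (Multiset.mem_toFinset.mp hw))) hε
  obtain ⟨k, hk, hk0⟩ := (hroots.and (eventually_gt_atTop 0)).exists
  refine ⟨k, hk0, fun z hz => ?_⟩
  rw [← mem_spectrum_iff_isRoot_charpoly, spectrum.map_pow_of_pos B hk0] at hz
  obtain ⟨w, hw, rfl⟩ := hz
  rw [norm_pow]
  exact hk w (Multiset.mem_toFinset.mpr ((mem_roots B.charpoly_monic.ne_zero).mpr
    (mem_spectrum_iff_isRoot_charpoly.mp hw)))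

end

theorem dominant_annihilating_polynomial_general {m : ℕ} (M : Matrix (Fin m) (Fin m) ℤ)
    (heig : ∀ z : ℂ, (M.map (Int.cast : ℤ → ℂ)).charpoly.IsRoot z → ‖z‖ ≠ 1) :
    ∃ (g : Polynomial ℤ) (L : ℕ), g ≠ 0 ∧ L ≤ g.natDegree ∧
      Polynomial.aeval M g = 0 ∧
      g.coeff L ≥ 4 * ((g.coeff L - 4 * (g.coeff L / 4)) +
        ∑ l ∈ (Finset.range (g.natDegree + 1)).erase L, |g.coeff l|) := by
  obtain ⟨ε, hε, hεm⟩ := exists_pos_one_add_pow_lt m (by norm_num : (1 : ℝ) < 10 / 9)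
  set Mc := M.map (Int.cast : ℤ → ℂ)
  obtain ⟨n, hn, hsep⟩ := Mc.exists_charpoly_pow_roots_norm_le_or_inv_le heig hε
  set q := (M ^ n).charpoly
  have hq : q.map (Int.castRingHom ℂ) = (Mc ^ n).charpoly := by
    rw [← charpoly_map, ← RingHom.mapMatrix_apply, map_pow]
    rfl
  obtain ⟨e, he⟩ := (Mc ^ n).charpoly_monic.exists_four_mul_l1Norm_lt (IsAlgClosed.splits _) hε
    (by rwa [charpoly_natDegree_eq_dim, Fintype.card_fin])
    fun z hz => hsep z (isRoot_of_mem_roots hz)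
  have hcast : ∀ a : ℤ, ‖Int.castRingHom ℂ a‖ = ‖a‖ := by simp [Int.norm_eq_abs]
  rw [← hq, l1Norm_map _ hcast, coeff_map, hcast] at he
  have hg : 4 * (expand ℤ n q).l1Norm < 5 * ‖(expand ℤ n q).coeff (n * e)‖ := by
    rwa [l1Norm_expand hn, coeff_expand_mul' hn]
  obtain ⟨c, hc0, hdeg, hdom⟩ := exists_C_mul_coeff_ge hg
  exact ⟨_, _, hc0, hdeg, by simp [expand_aeval, q, aeval_self_charpoly], hdom⟩

theorem dominant_annihilating_polynomial {m : ℕ} (M : Matrix (Fin m) (Fin m) ℤ)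
    (hM : M.det ≠ 0)
    (heig : ∀ z : ℂ, (M.map (Int.cast : ℤ → ℂ)).charpoly.IsRoot z → ‖z‖ ≠ 1) :
    ∃ (g : Polynomial ℤ) (L : ℕ), g ≠ 0 ∧ L ≤ g.natDegree ∧
      Polynomial.aeval M g = 0 ∧
      g.coeff L ≥ 4 * ((g.coeff L - 4 * (g.coeff L / 4)) +
        ∑ l ∈ (Finset.range (g.natDegree + 1)).erase L, |g.coeff l|) :=
  dominant_annihilating_polynomial_general M heig
end

section
/- Let M ∈ Z^{m×m} and let D ⊂ Z^m be a finite digit set containing 0 whose linear span is R^m. If addition in (M, D), i.e., a digit set conversion in base M from D+D to D, is computable by a p-local function, then no eigenvalue of M has modulus 1. -/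
open Matrix BigOperators

/-- `j`-th power (positive or negative) of a square matrix over a field. -/
noncomputable def mzpow {m : ℕ} (A : Matrix (Fin m) (Fin m) ℚ) (j : ℤ) :
    Matrix (Fin m) (Fin m) ℚ :=
  if 0 ≤ j then A ^ j.toNat else A⁻¹ ^ (-j).toNat

/-- Coordinatewise embedding of `ℤ^m` into `ℚ^m`. -/
def castQ {m : ℕ} (v : Fin m → ℤ) : Fin m → ℚ := fun i => (v i : ℚ)

/-- The set `Fin_D(M)` of vectors with a finite `(M, D)`-representation. -/
noncomputable def FinRep {m : ℕ} (M : Matrix (Fin m) (Fin m) ℤ)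
    (D : Finset (Fin m → ℤ)) : Set (Fin m → ℚ) :=
  { x | ∃ (I : Finset ℤ) (d : ℤ → Fin m → ℤ), (∀ j ∈ I, d j ∈ D) ∧
      x = ∑ j ∈ I, (mzpow (M.map (Int.cast : ℤ → ℚ)) j).mulVec (castQ (d j)) }

def IsPLocal {m : ℕ} (p : ℕ)
    (φ : (ℤ → Fin m → ℤ) → (ℤ → Fin m → ℤ)) : Prop :=
  ∃ r t : ℕ, p = r + t + 1 ∧
    ∃ Φ : (Fin p → Fin m → ℤ) → (Fin m → ℤ),
      ∀ (u : ℤ → Fin m → ℤ) (j : ℤ),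
        φ u j = Φ (fun k => u (j + (t : ℤ) - (k : ℤ)))

noncomputable def IsDigitConversion {m : ℕ} (M : Matrix (Fin m) (Fin m) ℤ)
    (A B : Set (Fin m → ℤ)) (φ : (ℤ → Fin m → ℤ) → (ℤ → Fin m → ℤ)) : Prop :=
  ∀ u : ℤ → Fin m → ℤ, (∀ j, u j ∈ A) → {j | u j ≠ 0}.Finite →
    (∀ j, φ u j ∈ B) ∧ {j | φ u j ≠ 0}.Finite ∧
    ∑ᶠ j : ℤ, (mzpow (M.map (Int.cast : ℤ → ℚ)) j).mulVec (castQ (φ u j))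
      = ∑ᶠ j : ℤ, (mzpow (M.map (Int.cast : ℤ → ℚ)) j).mulVec (castQ (u j))


/-!
If `z` is an eigenvalue of `M` with `|z| = 1`, pair digit vectors with a left eigenvector `v`:
the functional `L x = v ⬝ x` satisfies `L (M^j x) = z^j L x`, so every digit at every position
contributes at most a constant `C` to `L` of a represented value. Since `D` spans, some
digit `d` has `L d ≠ 0`. Starting from `d` at position `0` and repeatedly adding a sequence to
itself with the `p`-local conversion, after `n` steps the value is `2^n d` while, by locality, the
support has only grown to `[-pn, pn]`; hence `2^n |L d| ≤ (2pn + 1) C`, which fails for large `n`.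
-/

open Function Filter Topology

theorem Matrix.exists_vecMul_eq_smul_of_isRoot_charpoly {n K : Type*} [Fintype n]
    [DecidableEq n] [Field K] {A : Matrix n n K} {z : K} (hz : A.charpoly.IsRoot z) :
    ∃ v ≠ 0, v ᵥ* A = z • v := by
  rw [Polynomial.IsRoot, eval_charpoly] at hz
  obtain ⟨v, hv0, hv⟩ := exists_vecMul_eq_zero_iff.mpr hz
  refine ⟨v, hv0, ?_⟩
  rw [vecMul_sub, sub_eq_zero] at hv
  rw [← hv]
  ext i
  simp [vecMul, dotProduct, scalar_apply, diagonal_apply, mul_comm]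

theorem Fintype.linearCombination_rat_apply {m : Type*} [Fintype m] {K : Type*} [Field K]
    [CharZero K] (v : m → K) (x : m → ℚ) :
    Fintype.linearCombination ℚ v x = v ⬝ᵥ fun i => (x i : K) := by
  simp [Fintype.linearCombination_apply, dotProduct, Rat.smul_def, mul_comm]

theorem linearCombination_mulVec_map_intCast {m : Type*} [Fintype m]
    {M : Matrix m m ℤ} {v : m → ℂ} {z : ℂ} (hv : v ᵥ* M.map (Int.cast : ℤ → ℂ) = z • v)
    (x : m → ℚ) :
    Fintype.linearCombination ℚ v (M.map (Int.cast : ℤ → ℚ) *ᵥ x)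
      = z * Fintype.linearCombination ℚ v x := by
  have hcast : (fun i => (((M.map (Int.cast : ℤ → ℚ)) *ᵥ x) i : ℂ))
      = M.map (Int.cast : ℤ → ℂ) *ᵥ fun i => (x i : ℂ) := by
    ext i
    rw [← Rat.coe_castHom, RingHom.map_mulVec, Matrix.map_map]
    congr 2
  rw [Fintype.linearCombination_rat_apply, Fintype.linearCombination_rat_apply, hcast,
    dotProduct_mulVec, hv, smul_dotProduct, smul_eq_mul]

theorem exists_mem_linearCombination_castQ_ne_zero {m : ℕ} {D : Finset (Fin m → ℤ)}
    (hspan : Submodule.span ℝ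
        ((fun v : Fin m → ℤ => fun i => (v i : ℝ)) '' (D : Set (Fin m → ℤ)))
        = (⊤ : Submodule ℝ (Fin m → ℝ)))
    {v : Fin m → ℂ} (hv : v ≠ 0) :
    ∃ d ∈ D, Fintype.linearCombination ℚ v (castQ d) ≠ 0 := by
  by_contra! hD
  apply hv
  have hL : Fintype.linearCombination ℝ v = 0 := by
    refine LinearMap.ext_on hspan ?_
    rintro _ ⟨d, hd, rfl⟩
    simpa [Fintype.linearCombination_apply, castQ, Rat.smul_def, Complex.real_smul]
      using hD d hd
  ext i
  simpa using LinearMap.congr_fun hL (Pi.single i 1)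

section EigenFunctional

variable {m : ℕ} {L : (Fin m → ℚ) →ₗ[ℚ] ℂ} {A : Matrix (Fin m) (Fin m) ℚ} {z : ℂ}

theorem map_pow_mulVec_of_map_mulVec (hL : ∀ x, L (A *ᵥ x) = z * L x) (k : ℕ)
    (x : Fin m → ℚ) : L ((A ^ k) *ᵥ x) = z ^ k * L x := by
  induction k with
  | zero => simp
  | succ k ih => rw [pow_succ', ← mulVec_mulVec, hL, ih, pow_succ', mul_assoc]

theorem norm_map_mzpow_mulVec_le (hL : ∀ x, L (A *ᵥ x) = z * L x) (hz : ‖z‖ = 1) (j : ℤ)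
    (x : Fin m → ℚ) : ‖L (mzpow A j *ᵥ x)‖ ≤ ‖L x‖ := by
  unfold mzpow
  split_ifs with hj
  · rw [map_pow_mulVec_of_map_mulVec hL, norm_mul, norm_pow, hz, one_pow, one_mul]
  by_cases hA : IsUnit A.det
  · have hz0 : z ≠ 0 := by rintro rfl; simp at hz
    have hLinv : ∀ y, L (A⁻¹ *ᵥ y) = z⁻¹ * L y := fun y => by
      rw [eq_inv_mul_iff_mul_eq₀ hz0, ← hL, mulVec_mulVec, mul_nonsing_inv A hA, one_mulVec]
    rw [map_pow_mulVec_of_map_mulVec hLinv, norm_mul, norm_pow, norm_inv, hz, inv_one, one_pow,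
      one_mul]
  · -- otherwise `A⁻¹ = 0` by convention and the exponent `-j` is positive
    rw [nonsing_inv_apply_not_isUnit A hA, zero_pow (by omega), zero_mulVec, map_zero,
      norm_zero]
    exact norm_nonneg _

end EigenFunctional

theorem castQ_zero {m : ℕ} : castQ (0 : Fin m → ℤ) = 0 := by
  funext i; simp [castQ]

theorem castQ_add {m : ℕ} (a b : Fin m → ℤ) : castQ (a + b) = castQ a + castQ b := by
  funext i; simp [castQ]

noncomputable def seqValue {m : ℕ} (M : Matrix (Fin m) (Fin m) ℤ) (u : ℤ → Fin m → ℤ) :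
    Fin m → ℚ :=
  ∑ᶠ j : ℤ, mzpow (M.map (Int.cast : ℤ → ℚ)) j *ᵥ castQ (u j)

section SeqValue

variable {m : ℕ} (M : Matrix (Fin m) (Fin m) ℤ)

theorem support_mzpow_mulVec_castQ_subset (u : ℤ → Fin m → ℤ) :
    support (fun j => mzpow (M.map (Int.cast : ℤ → ℚ)) j *ᵥ castQ (u j)) ⊆ support u :=
  fun j hj hu => hj (by simp only [hu, castQ_zero, mulVec_zero])

theorem seqValue_single_zero (d : Fin m → ℤ) : seqValue M (Pi.single 0 d) = castQ d := by
  rw [seqValue, finsum_eq_single _ 0 fun j hj => by simp [hj, castQ_zero]]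
  simp [mzpow]

theorem seqValue_add {u w : ℤ → Fin m → ℤ} (hu : (support u).Finite) (hw : (support w).Finite) :
    seqValue M (u + w) = seqValue M u + seqValue M w := by
  simp only [seqValue, Pi.add_apply, castQ_add, mulVec_add]
  exact finsum_add_distrib (hu.subset (support_mzpow_mulVec_castQ_subset M u))
    (hw.subset (support_mzpow_mulVec_castQ_subset M w))

theorem norm_map_seqValue_le {L : (Fin m → ℚ) →ₗ[ℚ] ℂ} {z : ℂ}
    (hL : ∀ x, L (M.map (Int.cast : ℤ → ℚ) *ᵥ x) = z * L x) (hz : ‖z‖ = 1)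
    {D : Set (Fin m → ℤ)} {C : ℝ} (hC : ∀ d ∈ D, ‖L (castQ d)‖ ≤ C)
    {u : ℤ → Fin m → ℤ} (huD : ∀ j, u j ∈ D) {s : Finset ℤ} (hus : support u ⊆ s) :
    ‖L (seqValue M u)‖ ≤ s.card * C := by
  rw [seqValue, finsum_eq_sum_of_support_subset _
    ((support_mzpow_mulVec_castQ_subset M u).trans hus), map_sum]
  calc ‖∑ j ∈ s, L (mzpow (M.map (Int.cast : ℤ → ℚ)) j *ᵥ castQ (u j))‖
      ≤ ∑ j ∈ s, ‖L (mzpow (M.map (Int.cast : ℤ → ℚ)) j *ᵥ castQ (u j))‖ := norm_sum_le _ _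
    _ ≤ ∑ _j ∈ s, C := Finset.sum_le_sum fun j _ =>
        (norm_map_mzpow_mulVec_le hL hz j _).trans (hC _ (huD j))
    _ = s.card * C := by rw [Finset.sum_const, nsmul_eq_mul]

end SeqValue

section Locality

variable {m p : ℕ} {φ : (ℤ → Fin m → ℤ) → (ℤ → Fin m → ℤ)}

theorem IsPLocal.apply_zero_eq_zero (hφ : IsPLocal p φ) (hfin : (support (φ 0)).Finite) :
    φ 0 = 0 := by
  obtain ⟨r, t, -, Φ, hΦ⟩ := hφ
  have hconst : ∀ j, φ 0 j = Φ 0 := fun j => hΦ 0 j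
  by_contra hne
  have hΦ0 : Φ 0 ≠ 0 := fun h => hne (funext fun j => (hconst j).trans h)
  refine Set.infinite_univ (hfin.subset fun j _ => ?_)
  rw [mem_support, hconst]
  exact hΦ0

theorem IsPLocal.support_subset_Icc (hφ : IsPLocal p φ) (hφ0 : φ 0 = 0)
    {u : ℤ → Fin m → ℤ} {a b : ℤ} (hu : support u ⊆ Set.Icc a b) :
    support (φ u) ⊆ Set.Icc (a - p) (b + p) := by
  obtain ⟨r, t, hp, Φ, hΦ⟩ := hφ
  intro j hj
  by_contra hout
  apply hj
  have hwindow : (fun k : Fin p => u (j + t - k))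
      = fun k : Fin p => (0 : ℤ → Fin m → ℤ) (j + t - k) := by
    funext k
    by_contra hk
    have := hu hk
    simp only [Set.mem_Icc] at this hout
    omega
  rw [hΦ, hwindow, ← hΦ, hφ0, Pi.zero_apply]

end Locality

def iterateDouble {m : ℕ} (φ : (ℤ → Fin m → ℤ) → (ℤ → Fin m → ℤ)) (d : Fin m → ℤ) (n : ℕ) :
    ℤ → Fin m → ℤ :=
  (fun u => φ (u + u))^[n] (Pi.single 0 d)

namespace IsDigitConversion

variable {m p : ℕ} {M : Matrix (Fin m) (Fin m) ℤ} {D : Set (Fin m → ℤ)}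
  {φ : (ℤ → Fin m → ℤ) → (ℤ → Fin m → ℤ)}

theorem double (hconv : IsDigitConversion M {w | ∃ a ∈ D, ∃ b ∈ D, w = a + b} D φ)
    {u : ℤ → Fin m → ℤ} (huD : ∀ j, u j ∈ D) (hu : (support u).Finite) :
    (∀ j, φ (u + u) j ∈ D) ∧ (support (φ (u + u))).Finite ∧
      seqValue M (φ (u + u)) = seqValue M u + seqValue M u := by
  obtain ⟨hD, hfin, hval⟩ :=
    hconv (u + u) (fun j => ⟨u j, huD j, u j, huD j, rfl⟩) ((hu.union hu).subset (support_add _ _))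
  exact ⟨hD, hfin, hval.trans (seqValue_add M hu hu)⟩

theorem iterateDouble_spec (hconv : IsDigitConversion M {w | ∃ a ∈ D, ∃ b ∈ D, w = a + b} D φ)
    (hφ : IsPLocal p φ) (h0 : 0 ∈ D) {d : Fin m → ℤ} (hd : d ∈ D) (n : ℕ) :
    (∀ j, iterateDouble φ d n j ∈ D) ∧
      support (iterateDouble φ d n) ⊆ Set.Icc (-(p * n : ℤ)) (p * n) ∧
      seqValue M (iterateDouble φ d n) = (2 : ℚ) ^ n • castQ d := by
  have hφ0 : φ 0 = 0 :=
    hφ.apply_zero_eq_zero (hconv 0 (fun _ => ⟨0, h0, 0, h0, by simp⟩) (by simp)).2.1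
  induction n with
  | zero =>
    refine ⟨fun j => ?_, Pi.support_single_subset.trans (by simp),
      by simp [iterateDouble, seqValue_single_zero]⟩
    by_cases hj : j = 0 <;> simp [iterateDouble, hj, hd, h0]
  | succ n ih =>
    obtain ⟨huD, husupp, huval⟩ := ih
    obtain ⟨hD, -, hval⟩ := hconv.double huD ((Set.finite_Icc _ _).subset husupp)
    rw [iterateDouble, iterate_succ_apply', ← iterateDouble]
    refine ⟨hD, ?_, ?_⟩
    · refine (hφ.support_subset_Icc hφ0 ((support_add _ _).trans
        (Set.union_subset husupp husupp))).trans (Set.Icc_subset_Icc ?_ ?_) <;>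
        exact le_of_eq (by push_cast; ring)
    · rw [hval, huval, ← add_smul, pow_succ, mul_two]

end IsDigitConversion

theorem exists_add_lt_two_pow_mul (a b : ℝ) {c : ℝ} (hc : 0 < c) :
    ∃ n : ℕ, a * n + b < 2 ^ n * c := by
  have hlim : Tendsto (fun n : ℕ => (a * n + b) / 2 ^ n) atTop (𝓝 0) := by
    have h1 := tendsto_pow_const_div_const_pow_of_one_lt 1 one_lt_two
    have h2 := tendsto_inv_atTop_zero.comp
      (tendsto_pow_atTop_atTop_of_one_lt (one_lt_two : (1 : ℝ) < 2))
    have h := (h1.const_mul a).add (h2.const_mul b)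
    rw [mul_zero, mul_zero, add_zero] at h
    refine h.congr fun n => ?_
    simp only [pow_one, Function.comp_apply]
    ring
  obtain ⟨n, hn⟩ := (hlim.eventually_lt_const hc).exists
  exact ⟨n, by rwa [div_lt_iff₀ (by positivity), mul_comm c] at hn⟩

theorem parallel_addition_no_unit_circle_eigenvalue {m : ℕ}
    (M : Matrix (Fin m) (Fin m) ℤ) (D : Finset (Fin m → ℤ))
    (h0 : (0 : Fin m → ℤ) ∈ D)
    (hspan : Submodule.span ℝ
        ((fun v : Fin m → ℤ => fun i => (v i : ℝ)) '' (D : Set (Fin m → ℤ)))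
        = (⊤ : Submodule ℝ (Fin m → ℝ)))
    (hpar : ∃ (p : ℕ) (φ : (ℤ → Fin m → ℤ) → (ℤ → Fin m → ℤ)),
        IsPLocal p φ ∧
        IsDigitConversion M {w | ∃ a ∈ D, ∃ b ∈ D, w = a + b} (D : Set (Fin m → ℤ)) φ) :
    ∀ z : ℂ, (M.map (Int.cast : ℤ → ℂ)).charpoly.IsRoot z → ‖z‖ ≠ 1 := by
  intro z hz hz1
  obtain ⟨p, φ, hφ, hconv⟩ := hpar
  obtain ⟨v, hv0, hv⟩ := exists_vecMul_eq_smul_of_isRoot_charpoly hz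
  set L := Fintype.linearCombination ℚ v
  obtain ⟨d, hd, hLd⟩ := exists_mem_linearCombination_castQ_ne_zero hspan hv0
  set C := ∑ d ∈ D, ‖L (castQ d)‖
  have hC : ∀ d ∈ (D : Set (Fin m → ℤ)), ‖L (castQ d)‖ ≤ C := fun d hd =>
    Finset.single_le_sum (f := fun d => ‖L (castQ d)‖) (fun _ _ => norm_nonneg _) hd
  obtain ⟨n, hn⟩ := exists_add_lt_two_pow_mul (2 * p * C) C (norm_pos_iff.2 hLd)
  obtain ⟨hD, hsupp, hval⟩ := hconv.iterateDouble_spec (M := M) hφ h0 hd n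
  have hbound := norm_map_seqValue_le M (linearCombination_mulVec_map_intCast hv) hz1 hC hD
    (s := Finset.Icc _ _) (by simpa using hsupp)
  have hcard : ((Finset.Icc (-(p * n : ℤ)) (p * n)).card : ℝ) = 2 * p * n + 1 := by
    rw [Int.card_Icc, show (p * n : ℤ) + 1 - -(p * n) = ((2 * p * n + 1 : ℕ) : ℤ)
      by push_cast; ring, Int.toNat_natCast]
    push_cast; ring
  rw [hval, map_smul, Rat.smul_def, norm_mul, hcard] at hbound
  norm_num at hbound
  linarith
end
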